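/- arXiv:1810.10563 — 4 statements merged into one kernel-verified Lean document; each statement's English description precedes it below -/
import Mathlib

section
/- Let u ∈ ℝ^k and let 0 ≤ p ≤ q ≤ 1. Let F = {z ∈ ℝ^k : z ≥ 0 componentwise, p ≤ ∑_j z_j ≤ q} and let S = ∑_j max(u_j, 0) be the sum of the positive entries of u. If S < p, then every minimizer z* of ‖u − z‖² over F satisfies ∑_j z*_j = p; consequently, z* minimizes ‖u − z‖² over F if and only if z* minimizes ‖u − z‖² over the scaled simplex Δ_p = {z ∈ ℝ^k : z ≥ 0 componentwise, ∑_j z_j = p}. -/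
/-!
Write `u⁺ = max u 0`. Given a feasible `w` with `∑ w ≥ p`, the truncation `ℓ = min w u⁺` has
`∑ ℓ ≤ ∑ u⁺ < p`, so some `v` between `ℓ` and `w` has `∑ v = p`. In every coordinate either
`ℓ_j = w_j` (so `v_j = w_j`) or `u_j ≤ ℓ_j ≤ v_j ≤ w_j`, so `v` is coordinatewise at least as
close to `u` as `w`, and strictly closer wherever `v_j < w_j`, which happens somewhere if
`∑ w > p`. Hence a point of `F` off `Δ_p` is never a minimizer, and every point of `F` is
dominated by a point of `Δ_p ⊆ F`.
-/

open Finset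

lemma EuclideanSpace.norm_sq_eq_sum_sq {ι : Type*} [Fintype ι] (x : EuclideanSpace ℝ ι) :
    ‖x‖ ^ 2 = ∑ j, x j ^ 2 := by
  simp only [EuclideanSpace.norm_sq_eq, Real.norm_eq_abs, sq_abs]

lemma exists_mem_Icc_sum_eq {ι : Type*} [Fintype ι] {ℓ w : ι → ℝ} (hℓw : ℓ ≤ w) {p : ℝ}
    (hp : p ∈ Set.Icc (∑ j, ℓ j) (∑ j, w j)) : ∃ v ∈ Set.Icc ℓ w, ∑ j, v j = p :=
  (convex_Icc ℓ w).isPreconnected.intermediate_value (Set.left_mem_Icc.2 hℓw)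
    (Set.right_mem_Icc.2 hℓw) (by fun_prop) hp

lemma sq_sub_le_sq_sub_of_mem_Icc {u ℓ v w : ℝ} (hℓ : ℓ = w ∨ u ≤ ℓ) (hv : v ∈ Set.Icc ℓ w) :
    (u - v) ^ 2 ≤ (u - w) ^ 2 := by
  obtain ⟨hℓv, hvw⟩ := hv
  rcases hℓ with rfl | huℓ
  · rw [le_antisymm hvw hℓv]
  · nlinarith

lemma sq_sub_lt_sq_sub_of_mem_Ico {u ℓ v w : ℝ} (hℓ : ℓ = w ∨ u ≤ ℓ) (hv : v ∈ Set.Ico ℓ w) :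
    (u - v) ^ 2 < (u - w) ^ 2 := by
  obtain ⟨hℓv, hvw⟩ := hv
  rcases hℓ with rfl | huℓ
  · exact absurd hvw hℓv.not_gt
  · nlinarith

lemma min_max_zero_eq_or_le (w u : ℝ) : min w (max u 0) = w ∨ u ≤ min w (max u 0) := by
  rcases le_total w (max u 0) with h | h
  · exact .inl (min_eq_left h)
  · exact .inr ((min_eq_right h).symm ▸ le_max_left u 0)

lemma exists_sum_eq_norm_sub_sq_le {ι : Type*} [Fintype ι] {u w : EuclideanSpace ℝ ι} {p : ℝ}
    (hw : ∀ j, 0 ≤ w j) (hS : ∑ j, max (u j) 0 ≤ p) (hp : p ≤ ∑ j, w j) :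
    ∃ v : EuclideanSpace ℝ ι, (∀ j, 0 ≤ v j) ∧ ∑ j, v j = p ∧
      ‖u - v‖ ^ 2 ≤ ‖u - w‖ ^ 2 ∧ (p < ∑ j, w j → ‖u - v‖ ^ 2 < ‖u - w‖ ^ 2) := by
  set ℓ : ι → ℝ := fun j => min (w j) (max (u j) 0)
  have hℓ : ∀ j, ℓ j = w j ∨ u j ≤ ℓ j := fun j => min_max_zero_eq_or_le (w j) (u j)
  have hℓS : ∑ j, ℓ j ≤ p := (sum_le_sum fun j _ => min_le_right _ _).trans hS
  obtain ⟨v, ⟨hℓv, hvw⟩, hvp⟩ := exists_mem_Icc_sum_eq (fun j => min_le_left (w j) _) ⟨hℓS, hp⟩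
  simp only [EuclideanSpace.norm_sq_eq_sum_sq, PiLp.sub_apply]
  refine ⟨WithLp.toLp 2 v, fun j => (le_min (hw j) (le_max_right _ _)).trans (hℓv j), hvp,
    sum_le_sum fun j _ => sq_sub_le_sq_sub_of_mem_Icc (hℓ j) ⟨hℓv j, hvw j⟩, fun hpw => ?_⟩
  obtain ⟨j₀, -, hj₀⟩ : ∃ j ∈ univ, v j < w j := exists_lt_of_sum_lt (hvp ▸ hpw)
  exact sum_lt_sum (fun j _ => sq_sub_le_sq_sub_of_mem_Icc (hℓ j) ⟨hℓv j, hvw j⟩)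
    ⟨j₀, mem_univ _, sq_sub_lt_sq_sub_of_mem_Ico (hℓ j₀) ⟨hℓv j₀, hj₀⟩⟩

theorem stmt_1_general (k : ℕ) (u : EuclideanSpace ℝ (Fin k)) (p q : ℝ)
    (hpq : p ≤ q)
    (F : Set (EuclideanSpace ℝ (Fin k)))
    (hF : F = {z | (∀ j, 0 ≤ z j) ∧ p ≤ ∑ j, z j ∧ ∑ j, z j ≤ q})
    (Δp : Set (EuclideanSpace ℝ (Fin k)))
    (hΔp : Δp = {z | (∀ j, 0 ≤ z j) ∧ ∑ j, z j = p})
    (hS : ∑ j, max (u j) 0 < p) :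
    (∀ z ∈ F, (∀ w ∈ F, ‖u - z‖ ^ 2 ≤ ‖u - w‖ ^ 2) → ∑ j, z j = p) ∧
    (∀ z, (z ∈ F ∧ ∀ w ∈ F, ‖u - z‖ ^ 2 ≤ ‖u - w‖ ^ 2) ↔
      (z ∈ Δp ∧ ∀ w ∈ Δp, ‖u - z‖ ^ 2 ≤ ‖u - w‖ ^ 2)) := by
  have hΔF : Δp ⊆ F := by
    rw [hF, hΔp]
    exact fun z ⟨hz, hzp⟩ => ⟨hz, hzp.ge, hzp ▸ hpq⟩
  have sum_eq_of_isMin : ∀ z ∈ F, (∀ w ∈ F, ‖u - z‖ ^ 2 ≤ ‖u - w‖ ^ 2) → ∑ j, z j = p := by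
    rw [hF]
    rintro z ⟨hz, hpz, -⟩ hmin
    refine (eq_of_le_of_not_lt hpz fun hlt => ?_).symm
    obtain ⟨v, hv, hvp, -, hvz⟩ := exists_sum_eq_norm_sub_sq_le hz hS.le hpz
    exact (hvz hlt).not_ge (hmin v (hF ▸ hΔF (hΔp ▸ ⟨hv, hvp⟩)))
  refine ⟨sum_eq_of_isMin, fun z => ⟨fun ⟨hzF, hmin⟩ => ?_, fun ⟨hzΔ, hmin⟩ => ?_⟩⟩
  · refine ⟨hΔp ▸ ⟨?_, sum_eq_of_isMin z hzF hmin⟩, fun w hw => hmin w (hΔF hw)⟩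
    exact (hF ▸ hzF).1
  · refine ⟨hΔF hzΔ, fun w hwF => ?_⟩
    rw [hF] at hwF
    obtain ⟨v, hv, hvp, hvw, -⟩ := exists_sum_eq_norm_sub_sq_le hwF.1 hS.le hwF.2.1
    exact (hmin v (hΔp ▸ ⟨hv, hvp⟩)).trans hvw

/-- If the sum `S` of positive entries of `u` satisfies `S < p`, then every
minimizer of `‖u − z‖²` over `F = {z ≥ 0, p ≤ 1ᵀz ≤ q}` has `1ᵀz = p`, and minimizing
over `F` is equivalent to minimizing over the scaled simplex `Δ_p`. -/
theorem stmt_1 (k : ℕ) (u : EuclideanSpace ℝ (Fin k)) (p q : ℝ)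
    (hp : 0 ≤ p) (hpq : p ≤ q) (hq : q ≤ 1)
    (F : Set (EuclideanSpace ℝ (Fin k)))
    (hF : F = {z | (∀ j, 0 ≤ z j) ∧ p ≤ ∑ j, z j ∧ ∑ j, z j ≤ q})
    (Δp : Set (EuclideanSpace ℝ (Fin k)))
    (hΔp : Δp = {z | (∀ j, 0 ≤ z j) ∧ ∑ j, z j = p})
    (hS : ∑ j, max (u j) 0 < p) :
    (∀ z ∈ F, (∀ w ∈ F, ‖u - z‖ ^ 2 ≤ ‖u - w‖ ^ 2) → ∑ j, z j = p) ∧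
    (∀ z, (z ∈ F ∧ ∀ w ∈ F, ‖u - z‖ ^ 2 ≤ ‖u - w‖ ^ 2) ↔
      (z ∈ Δp ∧ ∀ w ∈ Δp, ‖u - z‖ ^ 2 ≤ ‖u - w‖ ^ 2)) :=
  stmt_1_general k u p q hpq F hF Δp hΔp hS
end

section
/- Let n, k be natural numbers with 1 ≤ k ≤ n, let K ⊆ {1,...,n} with |K| = k, and define B = {w ∈ ℝⁿ : w ≥ 0 componentwise, ∑_j w_j = 1, and w_j = 0 for all j ∉ K} and C = {w ∈ ℝⁿ : w ≥ 0 componentwise, ∑_j w_j = 1, ‖w‖₀ ≤ k}. Suppose w̄ ∈ B satisfies w̄_j > 0 for every j ∈ K. Then the Fréchet normal cone of C at w̄ equals the normal cone of the convex set B at w̄: N̂_C(w̄) = N_B(w̄). -/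
open scoped RealInnerProductSpace

/-!
The face `B` is convex and contained in `C`, and near `w̄` the two sets coincide: a point of `C`
close to `w̄` is still positive on all of `K`, and since its support has at most `k = |K|`
elements it must be exactly `K`. The Fréchet normal cone only sees a set near the base point, so
`N̂_C(w̄) = N̂_B(w̄)`, and for a convex set the Fréchet normal cone is the normal cone of convex
analysis: the segment from `w̄` to any `w ∈ B` stays in `B`, and along it the `o(‖u - w̄‖)` error
is absorbed by scaling.
-/

/-- The Fréchet normal cone of a set `C` at `x`: vectors `v` such that
`liminf_{u → x, u ∈ C, u ≠ x} −⟨v, u − x⟩ / ‖u − x‖ ≥ 0`, stated in ε-δ form: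
for every `ε > 0` there is `δ > 0` with `⟨v, u − x⟩ ≤ ε‖u − x‖` for all `u ∈ C`
with `u ≠ x` and `‖u − x‖ < δ`. -/
def frechetNormalCone {E : Type*} [NormedAddCommGroup E] [InnerProductSpace ℝ E]
    (C : Set E) (x : E) : Set E :=
  {v | ∀ ε > 0, ∃ δ > 0, ∀ u ∈ C, u ≠ x → ‖u - x‖ < δ → ⟪v, u - x⟫ ≤ ε * ‖u - x‖}

section NormalCone

variable {E : Type*} [NormedAddCommGroup E] [InnerProductSpace ℝ E]

def normalCone (B : Set E) (x : E) : Set E :=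
  {v | ∀ w ∈ B, ⟪v, w - x⟫ ≤ 0}

lemma frechetNormalCone_anti {B C : Set E} (h : B ⊆ C) (x : E) :
    frechetNormalCone C x ⊆ frechetNormalCone B x := by
  intro v hv ε hε
  obtain ⟨δ, hδ, hC⟩ := hv ε hε
  exact ⟨δ, hδ, fun u hu => hC u (h hu)⟩

lemma normalCone_subset_frechetNormalCone {B C U : Set E} {x : E} (hU : U ∈ nhds x)
    (hCU : C ∩ U ⊆ B) : normalCone B x ⊆ frechetNormalCone C x := by
  intro v hv ε hε
  obtain ⟨δ, hδ, hball⟩ := Metric.mem_nhds_iff.mp hU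
  refine ⟨δ, hδ, fun u hu _ hux => ?_⟩
  have huB : u ∈ B := hCU ⟨hu, hball (mem_ball_iff_norm.mpr hux)⟩
  exact (hv u huB).trans (by positivity)

lemma nonpos_of_forall_pos_le_mul {a b : ℝ} (h : ∀ ε > 0, a ≤ ε * b) : a ≤ 0 := by
  have hlim : Filter.Tendsto (fun ε : ℝ => ε * b) (nhdsWithin 0 (Set.Ioi 0)) (nhds 0) := by
    simpa using tendsto_nhdsWithin_of_tendsto_nhds ((continuous_mul_const b).tendsto 0)
  exact ge_of_tendsto hlim (eventually_nhdsWithin_of_forall fun ε hε => h ε hε)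

lemma Convex.frechetNormalCone_subset_normalCone {B : Set E} (hB : Convex ℝ B) {x : E}
    (hx : x ∈ B) : frechetNormalCone B x ⊆ normalCone B x := by
  intro v hv w hw
  by_cases hwx : w = x
  · simp [hwx]
  refine nonpos_of_forall_pos_le_mul (b := ‖w - x‖) fun ε hε => ?_
  obtain ⟨δ, hδ, hvδ⟩ := hv ε hε
  obtain ⟨c, hc, hcδ⟩ := exists_pos_mul_lt hδ ‖w - x‖
  set t := min c 1
  have ht : 0 < t := lt_min hc one_pos
  have hsub : (x + t • (w - x)) - x = t • (w - x) := add_sub_cancel_left x _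
  have hmem : x + t • (w - x) ∈ B := hB.add_smul_sub_mem hx hw ⟨ht.le, min_le_right c 1⟩
  have hne : x + t • (w - x) ≠ x := by
    simpa [ht.ne', sub_eq_zero] using hwx
  have hclose : ‖(x + t • (w - x)) - x‖ < δ := by
    rw [hsub, norm_smul, Real.norm_of_nonneg ht.le]
    calc t * ‖w - x‖ ≤ c * ‖w - x‖ := by gcongr; exact min_le_left c 1
      _ = ‖w - x‖ * c := mul_comm _ _
      _ < δ := hcδ
  have key := hvδ _ hmem hne hclose
  rw [hsub, real_inner_smul_right, norm_smul, Real.norm_of_nonneg ht.le, mul_left_comm] at key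
  exact le_of_mul_le_mul_left key ht

theorem frechetNormalCone_eq_normalCone_of_convex {B C U : Set E} {x : E} (hB : Convex ℝ B)
    (hx : x ∈ B) (hBC : B ⊆ C) (hU : U ∈ nhds x) (hCU : C ∩ U ⊆ B) :
    frechetNormalCone C x = normalCone B x :=
  subset_antisymm ((frechetNormalCone_anti hBC x).trans (hB.frechetNormalCone_subset_normalCone hx))
    (normalCone_subset_frechetNormalCone hU hCU)

end NormalCone

lemma isOpen_setOf_forall_pos {ι : Type*} (K : Finset ι) :
    IsOpen {w : EuclideanSpace ℝ ι | ∀ j ∈ K, 0 < w j} := by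
  simp only [Set.ofPred_forall]
  exact isOpen_biInter_finset fun j _ => isOpen_lt continuous_const (PiLp.continuous_apply 2 _ j)

section SparseSimplex

variable {ι : Type*} [Fintype ι]

def sparseSimplex (ι : Type*) [Fintype ι] (k : ℕ) : Set (EuclideanSpace ℝ ι) :=
  {w | (∀ j, 0 ≤ w j) ∧ ∑ j, w j = 1 ∧ (Finset.univ.filter (fun j => w j ≠ 0)).card ≤ k}

def simplexFace (K : Finset ι) : Set (EuclideanSpace ℝ ι) :=
  {w | (∀ j, 0 ≤ w j) ∧ ∑ j, w j = 1 ∧ ∀ j ∉ K, w j = 0}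

lemma convex_simplexFace (K : Finset ι) : Convex ℝ (simplexFace K) := by
  rintro w ⟨hw0, hw1, hwK⟩ u ⟨hu0, hu1, huK⟩ a b ha hb hab
  refine ⟨fun j => ?_, ?_, fun j hj => ?_⟩
  · simp only [PiLp.add_apply, PiLp.smul_apply, smul_eq_mul]
    exact add_nonneg (mul_nonneg ha (hw0 j)) (mul_nonneg hb (hu0 j))
  · simp only [PiLp.add_apply, PiLp.smul_apply, smul_eq_mul, Finset.sum_add_distrib,
      ← Finset.mul_sum, hw1, hu1, mul_one, hab]
  · simp [hwK j hj, huK j hj]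

lemma simplexFace_subset_sparseSimplex {K : Finset ι} {k : ℕ} (hK : K.card ≤ k) :
    simplexFace K ⊆ sparseSimplex ι k := by
  rintro w ⟨hw0, hw1, hwK⟩
  refine ⟨hw0, hw1, le_trans (Finset.card_le_card fun j hj => ?_) hK⟩
  by_contra hjK
  exact (Finset.mem_filter.mp hj).2 (hwK j hjK)

lemma sparseSimplex_inter_subset_simplexFace {K : Finset ι} {k : ℕ} (hK : k ≤ K.card) :
    sparseSimplex ι k ∩ {w | ∀ j ∈ K, 0 < w j} ⊆ simplexFace K := by
  rintro w ⟨⟨hw0, hw1, hwk⟩, hwpos⟩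
  have hsupp : K ⊆ Finset.univ.filter (fun j => w j ≠ 0) := fun j hj =>
    Finset.mem_filter.mpr ⟨Finset.mem_univ j, (hwpos j hj).ne'⟩
  have hsupp_eq := Finset.eq_of_subset_of_card_le hsupp (hwk.trans hK)
  refine ⟨hw0, hw1, fun j hj => ?_⟩
  by_contra hwj
  exact hj (hsupp_eq ▸ Finset.mem_filter.mpr ⟨Finset.mem_univ j, hwj⟩)

end SparseSimplex

theorem stmt_4_general (n k : ℕ)
    (K : Finset (Fin n)) (hK : K.card = k)
    (B C : Set (EuclideanSpace ℝ (Fin n)))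
    (hB : B = {w | (∀ j, 0 ≤ w j) ∧ ∑ j, w j = 1 ∧ ∀ j ∉ K, w j = 0})
    (hC : C = {w | (∀ j, 0 ≤ w j) ∧ ∑ j, w j = 1 ∧
      (Finset.univ.filter (fun j => w j ≠ 0)).card ≤ k})
    (wbar : EuclideanSpace ℝ (Fin n)) (hwB : wbar ∈ B)
    (hpos : ∀ j ∈ K, 0 < wbar j) :
    frechetNormalCone C wbar = {v | ∀ w ∈ B, ⟪v, w - wbar⟫ ≤ 0} := by
  change B = simplexFace K at hB
  change C = sparseSimplex (Fin n) k at hC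
  subst hB hC
  exact frechetNormalCone_eq_normalCone_of_convex (convex_simplexFace K) hwB
    (simplexFace_subset_sparseSimplex hK.le) ((isOpen_setOf_forall_pos K).mem_nhds hpos)
    (sparseSimplex_inter_subset_simplexFace hK.ge)

/-- For the cardinality-constrained simplex `C` and the face `B` supported
on a `k`-element set `K`, at any `w̄ ∈ B` positive on all of `K`, the Fréchet normal
cone of `C` equals the (convex) normal cone of `B`. -/
theorem stmt_4 (n k : ℕ) (hk1 : 1 ≤ k) (hkn : k ≤ n)
    (K : Finset (Fin n)) (hK : K.card = k)
    (B C : Set (EuclideanSpace ℝ (Fin n)))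
    (hB : B = {w | (∀ j, 0 ≤ w j) ∧ ∑ j, w j = 1 ∧ ∀ j ∉ K, w j = 0})
    (hC : C = {w | (∀ j, 0 ≤ w j) ∧ ∑ j, w j = 1 ∧
      (Finset.univ.filter (fun j => w j ≠ 0)).card ≤ k})
    (wbar : EuclideanSpace ℝ (Fin n)) (hwB : wbar ∈ B)
    (hpos : ∀ j ∈ K, 0 < wbar j) :
    frechetNormalCone C wbar = {v | ∀ w ∈ B, ⟪v, w - wbar⟫ ≤ 0} :=
  stmt_4_general n k K hK B C hB hC wbar hwB hpos
end

section
/- Let C ⊆ ℝ^k be a nonempty closed convex set contained in the nonnegative orthant {x ∈ ℝ^k : x_i ≥ 0 for all i}, and define f(y) = −(1/2)‖y‖² + min_{z ∈ C} (1/2)‖y − z‖². Then f is antitone with respect to the componentwise order: if x, y ∈ ℝ^k satisfy x_i ≤ y_i for all i, then f(y) ≤ f(x). -/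
/-! Expanding the square, `-(1/2)‖y‖² + (1/2)‖y - z‖² = (1/2)‖z‖² - ⟪y, z⟫`, so `f` is an infimum
of affine functions of `y`. Each of them is antitone for the componentwise order because its
slope `-z` lies in the nonpositive orthant, and an infimum of antitone functions is antitone. -/

open RealInnerProductSpace

theorem neg_half_norm_sq_add_half_norm_sub_sq {E : Type*} [NormedAddCommGroup E]
    [InnerProductSpace ℝ E] (y z : E) :
    -(1 / 2) * ‖y‖ ^ 2 + (1 / 2) * ‖y - z‖ ^ 2 = (1 / 2) * ‖z‖ ^ 2 - ⟪y, z⟫ := by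
  rw [norm_sub_sq_real]
  ring

theorem EuclideanSpace.inner_le_inner_of_le_of_nonneg {ι : Type*} [Fintype ι]
    {x y z : EuclideanSpace ℝ ι} (hxy : ∀ i, x i ≤ y i) (hz : ∀ i, 0 ≤ z i) :
    ⟪x, z⟫ ≤ ⟪y, z⟫ := by
  simp only [PiLp.inner_apply, RCLike.inner_apply, conj_trivial]
  exact Finset.sum_le_sum fun i _ => mul_le_mul_of_nonneg_left (hxy i) (hz i)

theorem stmt_12_general (k : ℕ) (C : Set (EuclideanSpace ℝ (Fin k)))
    (hCne : C.Nonempty)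
    (hCpos : ∀ z ∈ C, ∀ i, 0 ≤ z i)
    (f : EuclideanSpace ℝ (Fin k) → ℝ)
    (hf : ∀ y, f y = -(1 / 2) * ‖y‖ ^ 2 +
      ⨅ z : C, (1 / 2) * ‖y - (z : EuclideanSpace ℝ (Fin k))‖ ^ 2) :
    ∀ x y : EuclideanSpace ℝ (Fin k), (∀ i, x i ≤ y i) → f y ≤ f x := by
  intro x y hxy
  have : Nonempty C := hCne.to_subtype
  have hbdd : BddBelow (Set.range fun z : C =>
      (1 / 2) * ‖y - (z : EuclideanSpace ℝ (Fin k))‖ ^ 2) :=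
    ⟨0, by rintro _ ⟨z, rfl⟩; positivity⟩
  rw [hf, hf, ← sub_le_iff_le_add']
  refine le_ciInf fun z => ?_
  have hinf := ciInf_le hbdd z
  have hx := neg_half_norm_sq_add_half_norm_sub_sq x (z : EuclideanSpace ℝ (Fin k))
  have hy := neg_half_norm_sq_add_half_norm_sub_sq y (z : EuclideanSpace ℝ (Fin k))
  have hinner := EuclideanSpace.inner_le_inner_of_le_of_nonneg hxy (hCpos z z.2)
  linarith

/-- For a nonempty closed convex set `C` contained in the nonnegative
orthant, the function `f(y) = −(1/2)‖y‖² + min_{z ∈ C} (1/2)‖y − z‖²` is antitone with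
respect to the componentwise order: `x ≤ y` componentwise implies `f(y) ≤ f(x)`. -/
theorem stmt_12 (k : ℕ) (C : Set (EuclideanSpace ℝ (Fin k)))
    (hCne : C.Nonempty) (hCcl : IsClosed C) (hCcv : Convex ℝ C)
    (hCpos : ∀ z ∈ C, ∀ i, 0 ≤ z i)
    (f : EuclideanSpace ℝ (Fin k) → ℝ)
    (hf : ∀ y, f y = -(1 / 2) * ‖y‖ ^ 2 +
      ⨅ z : C, (1 / 2) * ‖y - (z : EuclideanSpace ℝ (Fin k))‖ ^ 2) :
    ∀ x y : EuclideanSpace ℝ (Fin k), (∀ i, x i ≤ y i) → f y ≤ f x :=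
  stmt_12_general k C hCne hCpos f hf
end

section
/- Let n, k be natural numbers with 1 ≤ k ≤ n, let 0 ≤ p ≤ q ≤ 1, and let V = {z ∈ ℝⁿ : z ≥ 0 componentwise, p ≤ ∑_j z_j ≤ q, ‖z‖₀ ≤ k}. Let y ∈ ℝⁿ satisfy y_1 ≥ y_2 ≥ ... ≥ y_n. Then there exists a minimizer z* of ‖y − z‖ over V with z*_j = 0 for all j > k; that is, the projection of y onto V can be taken to be supported on the indices of the k largest components of y. -/
/-!
Minimize the distance to `y` over the compact set of feasible vectors supported on the first
`k` indices. Any feasible `z` can be sorted decreasingly without leaving the feasible set; a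
nonnegative decreasing vector with at most `k` nonzero entries vanishes beyond index `k`, and by
the rearrangement inequality sorting `z` in the same order as `y` does not increase `‖y - z‖`.
-/

open Finset WithLp

theorem Tuple.exists_perm_antitone_comp {n : ℕ} {α : Type*} [LinearOrder α] (f : Fin n → α) :
    ∃ σ : Equiv.Perm (Fin n), Antitone (f ∘ σ) :=
  ⟨sort (OrderDual.toDual ∘ f), monotone_toDual_comp_iff.mp (monotone_sort _)⟩

theorem Monovary.sum_sq_sub_comp_perm_le {ι : Type*} [Fintype ι] {y z : ι → ℝ}
    {σ : Equiv.Perm ι} (h : Monovary y (z ∘ σ)) :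
    ∑ i, (y i - z (σ i)) ^ 2 ≤ ∑ i, (y i - z i) ^ 2 := by
  have hsq : ∑ i, z (σ i) ^ 2 = ∑ i, z i ^ 2 := Equiv.sum_comp σ (z · ^ 2)
  have hcross : ∑ i, y i * z i ≤ ∑ i, y i * z (σ i) := by
    simpa using h.sum_mul_comp_perm_le_sum_mul (σ := σ⁻¹)
  have expand (w : ι → ℝ) :
      ∑ i, (y i - w i) ^ 2 = ∑ i, y i ^ 2 - 2 * ∑ i, y i * w i + ∑ i, w i ^ 2 := by
    simp only [mul_sum, ← sum_sub_distrib, ← sum_add_distrib]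
    exact sum_congr rfl fun i _ => by ring
  rw [expand, expand z, hsq]
  linarith

theorem Monovary.norm_toLp_sub_comp_perm_le {ι : Type*} [Fintype ι] {y z : ι → ℝ}
    {σ : Equiv.Perm ι} (h : Monovary y (z ∘ σ)) :
    ‖toLp 2 y - toLp 2 (z ∘ σ)‖ ≤ ‖toLp 2 y - toLp 2 z‖ := by
  simp only [← dist_eq_norm, EuclideanSpace.dist_eq, Real.dist_eq, sq_abs]
  exact Real.sqrt_le_sqrt h.sum_sq_sub_comp_perm_le

theorem Antitone.eq_zero_of_card_filter_ne_zero_le {n k : ℕ} {α : Type*} [PartialOrder α]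
    [Zero α] [DecidableEq α] {w : Fin n → α} (hw : Antitone w) (h0 : ∀ j, 0 ≤ w j)
    (hk : #{j | w j ≠ 0} ≤ k) {j : Fin n} (hj : k ≤ j) : w j = 0 := by
  by_contra hne
  have hpos : 0 < w j := (h0 j).lt_of_ne' hne
  have hsub : Iic j ⊆ ({i | w i ≠ 0} : Finset (Fin n)) := fun i hi =>
    mem_filter.mpr ⟨mem_univ i, (hpos.trans_le (hw (mem_Iic.mp hi))).ne'⟩
  have hcard := card_le_card hsub
  rw [Fin.card_Iic] at hcard
  omega

theorem card_filter_ne_zero_le_of_eq_zero {n k : ℕ} {M : Type*} [Zero M] [DecidableEq M]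
    {w : Fin n → M} (hw : ∀ j : Fin n, k ≤ (j : ℕ) → w j = 0) : #{j | w j ≠ 0} ≤ k :=
  calc #{j | w j ≠ 0} ≤ #(range k) :=
        card_le_card_of_injOn Fin.val
          (fun j hj => mem_range.mpr (not_le.mp fun h => (mem_filter.mp hj).2 (hw j h)))
          Fin.val_injective.injOn
    _ = k := card_range k

theorem Equiv.Perm.card_filter_comp_ne_zero {ι M : Type*} [Fintype ι] [Zero M] [DecidableEq M]
    (w : ι → M) (σ : Equiv.Perm ι) : #{j | w (σ j) ≠ 0} = #{j | w j ≠ 0} :=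
  card_nbij' σ σ.symm (fun _ h => by simpa using h) (fun _ h => by simpa using h)
    (fun _ _ => by simp) (fun _ _ => by simp)

def budgetSet (ι : Type*) [Fintype ι] (p q : ℝ) : Set (ι → ℝ) :=
  {w | 0 ≤ w ∧ p ≤ ∑ i, w i ∧ ∑ i, w i ≤ q}

theorem isCompact_budgetSet (ι : Type*) [Fintype ι] (p q : ℝ) :
    IsCompact (budgetSet ι p q) := by
  have hsum : Continuous fun w : ι → ℝ => ∑ i, w i := by fun_prop
  refine (isCompact_Icc (a := 0) (b := fun _ => q)).of_isClosed_subset ?_ ?_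
  · exact isClosed_Ici.inter ((isClosed_le continuous_const hsum).inter
      (isClosed_le hsum continuous_const))
  · rintro w ⟨hw0, -, hwq⟩
    exact ⟨hw0, fun i => (single_le_sum (fun j _ => hw0 j) (mem_univ i)).trans hwq⟩

theorem comp_perm_mem_budgetSet {ι : Type*} [Fintype ι] {p q : ℝ} {w : ι → ℝ}
    (hw : w ∈ budgetSet ι p q) (σ : Equiv.Perm ι) : w ∘ σ ∈ budgetSet ι p q := by
  obtain ⟨hw0, hpw, hwq⟩ := hw
  have hsum : ∑ i, w (σ i) = ∑ i, w i := Equiv.sum_comp σ w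
  exact ⟨fun i => hw0 (σ i), by simpa [hsum] using hpw, by simpa [hsum] using hwq⟩

def leadingBudgetSet (n k : ℕ) (p q : ℝ) : Set (Fin n → ℝ) :=
  budgetSet (Fin n) p q ∩ {w | ∀ j : Fin n, k ≤ (j : ℕ) → w j = 0}

theorem isCompact_leadingBudgetSet (n k : ℕ) (p q : ℝ) :
    IsCompact (leadingBudgetSet n k p q) := by
  refine (isCompact_budgetSet _ p q).inter_right ?_
  simp only [Set.ofPred_forall]
  exact isClosed_iInter fun j => isClosed_iInter fun _ =>
    isClosed_eq (continuous_apply j) continuous_const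

theorem leadingBudgetSet_nonempty {n k : ℕ} {p q : ℝ} (hk : 1 ≤ k) (hkn : k ≤ n) (hp : 0 ≤ p)
    (hpq : p ≤ q) : (leadingBudgetSet n k p q).Nonempty := by
  refine ⟨Pi.single ⟨0, by omega⟩ p, ⟨?_, ?_, ?_⟩, fun j hj => ?_⟩
  · exact Pi.single_nonneg.mpr hp
  · simp
  · simpa using hpq
  · simp only [Pi.single_apply, Fin.ext_iff]
    exact if_neg (by omega)

theorem comp_mem_leadingBudgetSet {n k : ℕ} {p q : ℝ} {w : Fin n → ℝ}
    (hw : w ∈ budgetSet (Fin n) p q) (hk : #{j | w j ≠ 0} ≤ k) {σ : Equiv.Perm (Fin n)}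
    (hσ : Antitone (w ∘ σ)) : w ∘ σ ∈ leadingBudgetSet n k p q :=
  ⟨comp_perm_mem_budgetSet hw σ, fun _ hj => hσ.eq_zero_of_card_filter_ne_zero_le
    (fun i => hw.1 (σ i)) (by simpa [σ.card_filter_comp_ne_zero w] using hk) hj⟩

theorem stmt_13_general (n k : ℕ) (hk1 : 1 ≤ k) (hkn : k ≤ n)
    (p q : ℝ) (hp : 0 ≤ p) (hpq : p ≤ q)
    (V : Set (EuclideanSpace ℝ (Fin n)))
    (hV : V = {z | (∀ j, 0 ≤ z j) ∧ (p ≤ ∑ j, z j ∧ ∑ j, z j ≤ q) ∧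
      (Finset.univ.filter (fun j => z j ≠ 0)).card ≤ k})
    (y : Fin n → ℝ) (hy : Antitone y) :
    ∃ zstar ∈ V, (∀ z ∈ V, ‖(WithLp.equiv 2 (Fin n → ℝ)).symm y - zstar‖ ≤
        ‖(WithLp.equiv 2 (Fin n → ℝ)).symm y - z‖) ∧
      ∀ j : Fin n, k ≤ (j : ℕ) → zstar j = 0 := by
  subst hV
  obtain ⟨w, hw, hmin⟩ := (isCompact_leadingBudgetSet n k p q).exists_isMinOn
    (leadingBudgetSet_nonempty hk1 hkn hp hpq)
    (f := fun w => ‖toLp 2 y - toLp 2 w‖) (by fun_prop)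
  refine ⟨toLp 2 w, ⟨hw.1.1, hw.1.2, card_filter_ne_zero_le_of_eq_zero hw.2⟩,
    fun z hz => ?_, hw.2⟩
  obtain ⟨σ, hσ⟩ := Tuple.exists_perm_antitone_comp z.ofLp
  calc ‖toLp 2 y - toLp 2 w‖ ≤ ‖toLp 2 y - toLp 2 (z.ofLp ∘ σ)‖ :=
        hmin (comp_mem_leadingBudgetSet (p := p) (q := q) ⟨hz.1, hz.2.1⟩ hz.2.2 hσ)
    _ ≤ ‖toLp 2 y - toLp 2 z.ofLp‖ := (hy.monovary hσ).norm_toLp_sub_comp_perm_le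
    _ = _ := rfl

/-- Projection onto the cardinality-and-budget-constrained set
`V = {z ≥ 0, p ≤ 1ᵀz ≤ q, ‖z‖₀ ≤ k}` of a vector `y` sorted in decreasing order can be
taken to be supported on the first `k` indices (the `k` largest components of `y`). -/
theorem stmt_13 (n k : ℕ) (hk1 : 1 ≤ k) (hkn : k ≤ n)
    (p q : ℝ) (hp : 0 ≤ p) (hpq : p ≤ q) (hq : q ≤ 1)
    (V : Set (EuclideanSpace ℝ (Fin n)))
    (hV : V = {z | (∀ j, 0 ≤ z j) ∧ (p ≤ ∑ j, z j ∧ ∑ j, z j ≤ q) ∧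
      (Finset.univ.filter (fun j => z j ≠ 0)).card ≤ k})
    (y : Fin n → ℝ) (hy : Antitone y) :
    ∃ zstar ∈ V, (∀ z ∈ V, ‖(WithLp.equiv 2 (Fin n → ℝ)).symm y - zstar‖ ≤
        ‖(WithLp.equiv 2 (Fin n → ℝ)).symm y - z‖) ∧
      ∀ j : Fin n, k ≤ (j : ℕ) → zstar j = 0 :=
  stmt_13_general n k hk1 hkn p q hp hpq V hV y hy
end
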